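/- Let A be an invertible real symmetric m×m matrix, C an invertible real symmetric n×n matrix, B a real g×m matrix, and D a real g×n matrix. Consider the real symmetric block matrix T of size (m+g+g+n) given by rows of blocks: [A, Bᵀ, 0, 0; B, B A⁻¹ Bᵀ, -I, 0; 0, -I, D C⁻¹ Dᵀ, D; 0, 0, Dᵀ, C]. Then det T = (-1)^g · det A · det C. -/
import Mathlib


open Matrix

/-- The block matrix `[A, Bᵀ, 0, 0; B, BA⁻¹Bᵀ, -I, 0; 0, -I, DC⁻¹Dᵀ, D; 0, 0, Dᵀ, C]`. -/
noncomputable def glueMatrix {m n g : ℕ} {R : Type*} [Field R]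
    (A : Matrix (Fin m) (Fin m) R) (C : Matrix (Fin n) (Fin n) R)
    (B : Matrix (Fin g) (Fin m) R) (D : Matrix (Fin g) (Fin n) R) :
    Matrix ((Fin m ⊕ Fin g) ⊕ (Fin g ⊕ Fin n)) ((Fin m ⊕ Fin g) ⊕ (Fin g ⊕ Fin n)) R :=
  Matrix.fromBlocks
    (Matrix.fromBlocks A Bᵀ B (B * A⁻¹ * Bᵀ))
    (Matrix.fromBlocks 0 0 (-1) 0)
    (Matrix.fromBlocks 0 (-1) 0 0)
    (Matrix.fromBlocks (D * C⁻¹ * Dᵀ) D Dᵀ C)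

lemma detJ (g : ℕ) :
    (Matrix.fromBlocks (0 : Matrix (Fin g) (Fin g) ℝ) (-1 : Matrix (Fin g) (Fin g) ℝ)
      (-1 : Matrix (Fin g) (Fin g) ℝ) (0 : Matrix (Fin g) (Fin g) ℝ)).det = (-1 : ℝ)^g := by
  have hJ : (Matrix.fromBlocks (0 : Matrix (Fin g) (Fin g) ℝ) (-1 : Matrix (Fin g) (Fin g) ℝ)
      (-1 : Matrix (Fin g) (Fin g) ℝ) (0 : Matrix (Fin g) (Fin g) ℝ)) =
      (Matrix.fromBlocks 1 0 (-1) 1) * (Matrix.fromBlocks 1 1 0 1) *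
      (Matrix.fromBlocks 1 0 (-1) 1) * (Matrix.fromBlocks 1 0 0 (-1)) := by
    simp [Matrix.fromBlocks_multiply]
  rw [hJ, Matrix.det_mul, Matrix.det_mul, Matrix.det_mul,
    Matrix.det_fromBlocks_zero₁₂, Matrix.det_fromBlocks_zero₂₁,
    Matrix.det_fromBlocks_zero₂₁]
  simp [Matrix.det_neg]

section main

variable {m n g : ℕ}
  (A : Matrix (Fin m) (Fin m) ℝ) (C : Matrix (Fin n) (Fin n) ℝ)
  (B : Matrix (Fin g) (Fin m) ℝ) (D : Matrix (Fin g) (Fin n) ℝ)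

noncomputable def Zmat : Matrix ((Fin m ⊕ Fin g) ⊕ (Fin g ⊕ Fin n))
    ((Fin m ⊕ Fin g) ⊕ (Fin g ⊕ Fin n)) ℝ :=
  Matrix.fromBlocks
    (Matrix.fromBlocks A 0 0 0)
    (Matrix.fromBlocks 0 0 (-1) 0)
    (Matrix.fromBlocks 0 (-1) 0 0)
    (Matrix.fromBlocks 0 0 0 C)

noncomputable def E1mat : Matrix ((Fin m ⊕ Fin g) ⊕ (Fin g ⊕ Fin n))
    ((Fin m ⊕ Fin g) ⊕ (Fin g ⊕ Fin n)) ℝ :=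
  Matrix.fromBlocks
    (Matrix.fromBlocks 1 0 (B * A⁻¹) 1) 0 0
    (Matrix.fromBlocks 1 (D * C⁻¹) 0 1)

noncomputable def E2mat : Matrix ((Fin m ⊕ Fin g) ⊕ (Fin g ⊕ Fin n))
    ((Fin m ⊕ Fin g) ⊕ (Fin g ⊕ Fin n)) ℝ :=
  Matrix.fromBlocks
    (Matrix.fromBlocks 1 (A⁻¹ * Bᵀ) 0 1) 0 0
    (Matrix.fromBlocks 1 0 (C⁻¹ * Dᵀ) 1)

noncomputable def glueMatrix' : Matrix ((Fin m ⊕ Fin g) ⊕ (Fin g ⊕ Fin n))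
    ((Fin m ⊕ Fin g) ⊕ (Fin g ⊕ Fin n)) ℝ :=
  Matrix.fromBlocks
    (Matrix.fromBlocks A Bᵀ B (B * A⁻¹ * Bᵀ))
    (Matrix.fromBlocks 0 0 (-1) 0)
    (Matrix.fromBlocks 0 (-1) 0 0)
    (Matrix.fromBlocks (D * C⁻¹ * Dᵀ) D Dᵀ C)

lemma glue_factorization (hAu : IsUnit A.det) (hCu : IsUnit C.det) :
    glueMatrix' A C B D = E1mat A C B D * Zmat A C * E2mat A C B D := by
  have hA1 : A * A⁻¹ = 1 := Matrix.mul_nonsing_inv A hAu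
  have hA2 : A⁻¹ * A = 1 := Matrix.nonsing_inv_mul A hAu
  have hC1 : C * C⁻¹ = 1 := Matrix.mul_nonsing_inv C hCu
  have hC2 : C⁻¹ * C = 1 := Matrix.nonsing_inv_mul C hCu
  have hBA : B * A⁻¹ * A = B := by rw [Matrix.mul_assoc, hA2, Matrix.mul_one]
  have hDC : D * C⁻¹ * C = D := by rw [Matrix.mul_assoc, hC2, Matrix.mul_one]
  have hABt : A * (A⁻¹ * Bᵀ) = Bᵀ := by rw [← Matrix.mul_assoc, hA1, Matrix.one_mul]
  have hCDt : C * (C⁻¹ * Dᵀ) = Dᵀ := by rw [← Matrix.mul_assoc, hC1, Matrix.one_mul]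
  simp only [glueMatrix', E1mat, Zmat, E2mat, Matrix.fromBlocks_multiply]
  simp [Matrix.fromBlocks_multiply, hBA, hDC, hABt, hCDt, Matrix.mul_assoc]

lemma glue_detZ : (Zmat A C (g := g)).det = (-1 : ℝ)^g * A.det * C.det := by
  let e : (Fin m ⊕ Fin g) ⊕ (Fin g ⊕ Fin n) ≃ (Fin m ⊕ (Fin g ⊕ Fin g)) ⊕ Fin n :=
    (Equiv.sumAssoc (Fin m ⊕ Fin g) (Fin g) (Fin n)).symm.trans
      (Equiv.sumCongr (Equiv.sumAssoc (Fin m) (Fin g) (Fin g)) (Equiv.refl (Fin n)))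
  let W : Matrix ((Fin m ⊕ (Fin g ⊕ Fin g)) ⊕ Fin n) ((Fin m ⊕ (Fin g ⊕ Fin g)) ⊕ Fin n) ℝ :=
    Matrix.fromBlocks
      (Matrix.fromBlocks A 0 0
        (Matrix.fromBlocks (0 : Matrix (Fin g) (Fin g) ℝ) (-1) (-1) 0)) 0 0 C
  have hZW : Zmat A C (g := g) = W.submatrix e e := by
    ext i j
    rcases i with (i | i) | (i | i) <;> rcases j with (j | j) | (j | j) <;>
      simp [Zmat, W, e, Matrix.submatrix_apply]
  rw [hZW, Matrix.det_submatrix_equiv_self]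
  rw [show W = Matrix.fromBlocks
      (Matrix.fromBlocks A 0 0
        (Matrix.fromBlocks (0 : Matrix (Fin g) (Fin g) ℝ) (-1) (-1) 0)) 0 0 C from rfl,
    Matrix.det_fromBlocks_zero₂₁, Matrix.det_fromBlocks_zero₂₁, detJ]
  ring

end main


theorem stmt_4 (m n g : ℕ)
    (A : Matrix (Fin m) (Fin m) ℝ) (hA : A.IsSymm) (hAu : IsUnit A.det)
    (C : Matrix (Fin n) (Fin n) ℝ) (hC : C.IsSymm) (hCu : IsUnit C.det)
    (B : Matrix (Fin g) (Fin m) ℝ) (D : Matrix (Fin g) (Fin n) ℝ) :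
    (glueMatrix A C B D).det = (-1 : ℝ) ^ g * A.det * C.det := by
  have : glueMatrix A C B D = glueMatrix' A C B D := rfl
  rw [this, glue_factorization A C B D hAu hCu, Matrix.det_mul, Matrix.det_mul]
  have hE1 : (E1mat A C B D).det = 1 := by
    rw [E1mat, Matrix.det_fromBlocks_zero₂₁, Matrix.det_fromBlocks_zero₁₂,
      Matrix.det_fromBlocks_zero₂₁]
    simp
  have hE2 : (E2mat A C B D).det = 1 := by
    rw [E2mat, Matrix.det_fromBlocks_zero₂₁, Matrix.det_fromBlocks_zero₂₁,
      Matrix.det_fromBlocks_zero₁₂]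
    simp
  rw [hE1, hE2, one_mul, mul_one, glue_detZ]
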